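/- (Theorem 3, energy decrease of the iterative Viterbi scheme.) Let ŷ ∈ 𝒴^n be such that every entry of m(ŷ) is strictly positive, define the coefficients λ̂_{β,b} = log((Σ_{β'∈𝒴} m_{β',b}(ŷ))/m_{β,b}(ŷ)), and let ỹ ∈ 𝒴^n be any minimizer over z^n ∈ 𝒴^n of the linearized cost Σ_{β∈𝒴} Σ_{b∈𝒴^k} λ̂_{β,b}·m_{β,b}(z^n) + α·d_n(x^n,z^n). Then the energy does not increase: H(m(ỹ)) + α·d_n(x^n,ỹ) ≤ H(m(ŷ)) + α·d_n(x^n,ŷ). -/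

import Mathlib

/-- The entropy `𝓗(v)` of the (unnormalized) nonnegative vector `v`:
`𝓗(v) = ∑ i, (v i / ‖v‖₁) * log (‖v‖₁ / v i)` if `v ≠ 0`, and `𝓗(0) = 0`,
where for a vector with nonnegative components `‖v‖₁ = ∑ i, v i`. -/
noncomputable def vecEnt {ι : Type*} [Fintype ι] (v : ι → ℝ) : ℝ :=
  @ite ℝ (v = 0) (Classical.propDecidable _) 0
    (∑ i, (v i / ∑ j, v j) * Real.log ((∑ j, v j) / v i))

/-- Conditional empirical entropy of a `|𝒴| × |𝒴|^k` matrix `m` with nonnegative entries: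
`H(m) = ∑_{b ∈ 𝒴^k} (∑_{β ∈ 𝒴} m_{β,b}) ⬝ 𝓗(m_{·,b})`. -/
noncomputable def condEnt {Y : Type*} [Fintype Y] {k : ℕ} (m : Y → (Fin k → Y) → ℝ) : ℝ :=
  ∑ b : Fin k → Y, (∑ β : Y, m β b) * vecEnt (fun β => m β b)

/-- The `(k+1)`-th order empirical count matrix of a cyclic sequence `y` of length `n`:
`m_{β,b}(y^n) = (1/n)·|{1 ≤ i ≤ n : (y_{i−k},…,y_{i−1}) = b and y_i = β}|`,
with indices taken cyclically (modulo `n`). -/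
noncomputable def empM {Y : Type*} [Fintype Y] [DecidableEq Y] (n k : ℕ) [NeZero n]
    (y : ZMod n → Y) (β : Y) (b : Fin k → Y) : ℝ :=
  ((Finset.univ.filter (fun i : ZMod n =>
      y i = β ∧ ∀ j : Fin k, y (i - (k : ZMod n) + ((j : ℕ) : ZMod n)) = b j)).card : ℝ) / n

/-- Average per-letter distortion `d_n(x^n, y^n) = (1/n) ∑_{i=1}^n d(x_i, y_i)`. -/
noncomputable def distn {X Y : Type*} (n : ℕ) [NeZero n] (d : X → Y → ℝ)
    (x : ZMod n → X) (y : ZMod n → Y) : ℝ :=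
  (∑ i : ZMod n, d (x i) (y i)) / n

/-- The energy (cost of problem (P1)): `𝓔(y^n) = H(m(y^n)) + α·d_n(x^n, y^n)`. -/
noncomputable def energy {X Y : Type*} [Fintype Y] [DecidableEq Y] (n k : ℕ) [NeZero n]
    (x : ZMod n → X) (α : ℝ) (d : X → Y → ℝ) (y : ZMod n → Y) : ℝ :=
  condEnt (fun β b => empM n k y β b) + α * distn n d x y

/-- The linearized cost (problem (P2)):
`∑_{β,b} λ_{β,b}·m_{β,b}(y^n) + α·d_n(x^n, y^n)`. -/
noncomputable def linCost {X Y : Type*} [Fintype Y] [DecidableEq Y] (n k : ℕ) [NeZero n]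
    (x : ZMod n → X) (α : ℝ) (d : X → Y → ℝ) (lam : Y → (Fin k → Y) → ℝ)
    (y : ZMod n → Y) : ℝ :=
  (∑ β : Y, ∑ b : Fin k → Y, lam β b * empM n k y β b) + α * distn n d x y

/-- The coefficient matrix `Λ(q)` of a positive matrix `q`:
`λ_{β,b} = log((∑_{β'} q_{β',b}) / q_{β,b})`. -/
noncomputable def lamOf {Y : Type*} [Fintype Y] {k : ℕ}
    (q : Y → (Fin k → Y) → ℝ) (β : Y) (b : Fin k → Y) : ℝ :=
  Real.log ((∑ β' : Y, q β' b) / q β b)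

/-!
The energy is majorized by linearized costs that touch it at the point of linearization:
with `λ = Λ(m(ŷ))` one has `H(m(ŷ)) = ∑ λ_{β,b} m_{β,b}(ŷ)` exactly, while for every `z`,
`H(m(z)) ≤ ∑ λ_{β,b} m_{β,b}(z)` column by column by Gibbs' inequality. Hence
`𝓔(ỹ) ≤ linCost(ỹ) ≤ linCost(ŷ) = 𝓔(ŷ)`.
-/

open Finset Real

theorem mul_log_div_le_sub {a c : ℝ} (ha : 0 ≤ a) (hc : 0 < c) : a * log (c / a) ≤ c - a := by
  rcases ha.eq_or_lt with rfl | ha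
  · simpa using hc.le
  · calc a * log (c / a) ≤ a * (c / a - 1) :=
          mul_le_mul_of_nonneg_left (log_le_sub_one_of_pos (div_pos hc ha)) ha.le
      _ = c - a := by field_simp

theorem sum_mul_vecEnt {ι : Type*} [Fintype ι] (v : ι → ℝ) :
    (∑ i, v i) * vecEnt v = ∑ i, v i * log ((∑ j, v j) / v i) := by
  by_cases hv : v = 0
  · simp [hv, vecEnt]
  rw [vecEnt, if_neg hv, mul_sum]
  refine sum_congr rfl fun i _ => ?_
  by_cases hs : ∑ j, v j = 0
  · simp [hs] -- both sides vanish, the right one because `log 0 = 0`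
  · rw [← mul_assoc, mul_div_cancel₀ _ hs]

/-- Gibbs' inequality for unnormalized weights. -/
theorem sum_mul_log_sum_div_le {ι : Type*} [Fintype ι] {v q : ι → ℝ} (hv : ∀ i, 0 ≤ v i)
    (hq : ∀ i, 0 < q i) :
    ∑ i, v i * log ((∑ j, v j) / v i) ≤ ∑ i, v i * log ((∑ j, q j) / q i) := by
  set s := ∑ j, v j
  set S := ∑ j, q j
  rcases (sum_nonneg fun i _ => hv i : 0 ≤ s).eq_or_lt with hs | hs
  · have hv0 : ∀ i, v i = 0 := fun i =>
      (sum_eq_zero_iff_of_nonneg fun j _ => hv j).mp hs.symm i (mem_univ i)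
    simp [hv0]
  obtain ⟨i₀, -, -⟩ := exists_ne_zero_of_sum_ne_zero hs.ne'
  have hS : 0 < S := sum_pos (fun i _ => hq i) ⟨i₀, mem_univ i₀⟩
  have pointwise : ∀ i, v i * log (s / v i) - v i * log (S / q i) ≤ s * q i / S - v i := by
    intro i
    rcases (hv i).eq_or_lt with hvi | hvi
    · rw [← hvi]
      simpa using div_nonneg (mul_nonneg hs.le (hq i).le) hS.le
    calc v i * log (s / v i) - v i * log (S / q i)
        = v i * log (s * q i / S / v i) := by
          rw [← mul_sub, ← log_div (div_pos hs hvi).ne' (div_pos hS (hq i)).ne',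
            div_div_eq_mul_div, div_mul_eq_mul_div, div_right_comm]
      _ ≤ s * q i / S - v i := mul_log_div_le_sub hvi.le (div_pos (mul_pos hs (hq i)) hS)
  have total : ∑ i, (s * q i / S - v i) = 0 := by
    rw [sum_sub_distrib, ← sum_div, ← mul_sum, mul_div_cancel_right₀ _ hS.ne', sub_self]
  have := sum_le_sum fun i (_ : i ∈ univ) => pointwise i
  rw [sum_sub_distrib, total] at this
  linarith

section CondEnt

variable {Y : Type*} [Fintype Y] {k : ℕ}

theorem condEnt_eq_sum_lamOf_mul (m : Y → (Fin k → Y) → ℝ) :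
    condEnt m = ∑ β, ∑ b, lamOf m β b * m β b := by
  rw [sum_comm, condEnt]
  refine sum_congr rfl fun b _ => ?_
  rw [sum_mul_vecEnt]
  exact sum_congr rfl fun β _ => mul_comm _ _

theorem condEnt_le_sum_lamOf_mul {m q : Y → (Fin k → Y) → ℝ} (hm : ∀ β b, 0 ≤ m β b)
    (hq : ∀ β b, 0 < q β b) : condEnt m ≤ ∑ β, ∑ b, lamOf q β b * m β b := by
  rw [sum_comm, condEnt]
  refine sum_le_sum fun b _ => ?_
  rw [sum_mul_vecEnt]
  refine (sum_mul_log_sum_div_le (fun β => hm β b) (fun β => hq β b)).trans_eq ?_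
  exact sum_congr rfl fun β _ => mul_comm _ _

end CondEnt

section Energy

variable {X Y : Type*} [Fintype Y] [DecidableEq Y] (n k : ℕ) [NeZero n]
  (x : ZMod n → X) (α : ℝ) (d : X → Y → ℝ)

theorem empM_nonneg (y : ZMod n → Y) (β : Y) (b : Fin k → Y) : 0 ≤ empM n k y β b := by
  unfold empM
  positivity

theorem energy_eq_linCost_lamOf_empM (y : ZMod n → Y) :
    energy n k x α d y = linCost n k x α d (lamOf (empM n k y)) y := by
  rw [energy, linCost, condEnt_eq_sum_lamOf_mul]

theorem energy_le_linCost_lamOf {q : Y → (Fin k → Y) → ℝ} (hq : ∀ β b, 0 < q β b)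
    (y : ZMod n → Y) : energy n k x α d y ≤ linCost n k x α d (lamOf q) y := by
  rw [energy, linCost]
  gcongr
  exact condEnt_le_sum_lamOf_mul (empM_nonneg n k y) hq

end Energy

theorem stmt10_general {X Y : Type*} [Fintype Y] [DecidableEq Y]
    (n k : ℕ) [NeZero n]
    (x : ZMod n → X) (α : ℝ)
    (d : X → Y → ℝ)
    (yhat : ZMod n → Y)
    (hpos : ∀ (β : Y) (b : Fin k → Y), 0 < empM n k yhat β b)
    (ytil : ZMod n → Y)
    (hmin : ∀ z : ZMod n → Y,
      linCost n k x α d (lamOf (empM n k yhat)) ytil ≤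
        linCost n k x α d (lamOf (empM n k yhat)) z) :
    energy n k x α d ytil ≤ energy n k x α d yhat :=
  calc energy n k x α d ytil ≤ linCost n k x α d (lamOf (empM n k yhat)) ytil :=
        energy_le_linCost_lamOf n k x α d hpos ytil
    _ ≤ linCost n k x α d (lamOf (empM n k yhat)) yhat := hmin yhat
    _ = energy n k x α d yhat := (energy_eq_linCost_lamOf_empM n k x α d yhat).symm

/-- Theorem 3, energy decrease of the iterative Viterbi scheme: if the
coefficients are computed at `m(ŷ)` (assumed strictly positive) and `ỹ` minimizes the
resulting linearized cost, then `𝓔(ỹ) ≤ 𝓔(ŷ)`. -/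
theorem stmt10 {X Y : Type*} [Fintype X] [Fintype Y] [Nonempty X] [Nonempty Y] [DecidableEq Y]
    (n k : ℕ) [NeZero n] (hk : 0 < k)
    (x : ZMod n → X) (α : ℝ) (hα : 0 ≤ α)
    (d : X → Y → ℝ) (hd : ∀ a b, 0 ≤ d a b)
    (yhat : ZMod n → Y)
    (hpos : ∀ (β : Y) (b : Fin k → Y), 0 < empM n k yhat β b)
    (ytil : ZMod n → Y)
    (hmin : ∀ z : ZMod n → Y,
      linCost n k x α d (lamOf (empM n k yhat)) ytil ≤
        linCost n k x α d (lamOf (empM n k yhat)) z) :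
    energy n k x α d ytil ≤ energy n k x α d yhat :=
  stmt10_general n k x α d yhat hpos ytil hmin
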